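/- arXiv:2201.01269 — 3 statements merged into one kernel-verified Lean document; each statement's English description precedes it below -/
import Mathlib

section
/- Let X be a nonnegative real random variable on a probability space, and for λ ≥ 0 define its log-Laplace transform φ(λ) := −log E[exp(−λ X)] (which is a finite nonnegative real number since exp(−λX) ∈ (0,1]). Then the following are equivalent: (i) for every ε > 0 one has P(X < ε) > 0 (i.e. 0 lies in the support of the law of X); (ii) φ(λ)/λ → 0 as λ → ∞. -/
open MeasureTheory Filter ProbabilityTheory Real Topology

/-! On the Laplace side, `φ(λ) = -cgf X P (-λ)`. If `P(X ≤ ε) = p > 0`, the reverse Chernoff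
bound `E[exp(-λX)] ≥ p exp(-λε)` gives `0 ≤ φ(λ) ≤ λε - log p`, so `φ` grows sublinearly.
If instead `P(X < ε) = 0`, then `X ≥ ε` a.s. and `φ(λ) ≥ λε`. -/

lemma tendsto_div_atTop_zero_of_sublinear {g : ℝ → ℝ} (hg : ∀ᶠ l in atTop, 0 ≤ g l)
    (hsub : ∀ ε > 0, ∃ c, ∀ᶠ l in atTop, g l ≤ ε * l + c) :
    Tendsto (fun l ↦ g l / l) atTop (𝓝 0) := by
  refine tendsto_order.2 ⟨fun a ha ↦ ?_, fun a ha ↦ ?_⟩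
  · filter_upwards [hg, eventually_gt_atTop 0] with l hgl hl
    exact ha.trans_le (div_nonneg hgl hl.le)
  · obtain ⟨c, hc⟩ := hsub (a / 2) (half_pos ha)
    have hcl : ∀ᶠ l in atTop, c / l < a / 2 :=
      (tendsto_const_nhds.div_atTop tendsto_id).eventually_lt_const (half_pos ha)
    filter_upwards [hc, hcl, eventually_gt_atTop 0] with l hgl hcl hl
    calc g l / l ≤ (a / 2 * l + c) / l := by gcongr
      _ = a / 2 + c / l := by field_simp
      _ < a := by linarith

section Cgf

variable {Ω : Type*} [MeasurableSpace Ω] {μ : Measure Ω} {X : Ω → ℝ} {t ε : ℝ}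

lemma integrable_exp_mul_of_nonpos_of_ae_ge [IsFiniteMeasure μ] (hX : AEMeasurable X μ)
    (ht : t ≤ 0) (hε : ∀ᵐ ω ∂μ, ε ≤ X ω) :
    Integrable (fun ω ↦ exp (t * X ω)) μ := by
  refine .of_mem_Icc 0 (exp (t * ε)) (measurable_exp.comp_aemeasurable (hX.const_mul t)) ?_
  filter_upwards [hε] with ω hω
  exact ⟨(exp_pos _).le, exp_le_exp.2 (mul_le_mul_of_nonpos_left hω ht)⟩

lemma cgf_le_mul_of_ae_ge [IsProbabilityMeasure μ] (hX : AEMeasurable X μ) (ht : t ≤ 0)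
    (hε : ∀ᵐ ω ∂μ, ε ≤ X ω) :
    cgf X μ t ≤ t * ε := by
  have hint := integrable_exp_mul_of_nonpos_of_ae_ge hX ht hε
  have hmgf : mgf X μ t ≤ exp (t * ε) := by
    simpa only [mgf_const] using mgf_anti_of_nonpos (X := fun _ ↦ ε) hε ht (integrable_const _)
  calc cgf X μ t ≤ log (exp (t * ε)) := log_le_log (mgf_pos hint) hmgf
    _ = t * ε := log_exp _

lemma mul_add_log_measureReal_le_cgf [IsFiniteMeasure μ] (ht : t ≤ 0)
    (hint : Integrable (fun ω ↦ exp (t * X ω)) μ) (hpos : 0 < μ.real {ω | X ω ≤ ε}) :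
    t * ε + log (μ.real {ω | X ω ≤ ε}) ≤ cgf X μ t := by
  have hsub : {ω | X ω ≤ ε} ⊆ {ω | exp (t * ε) ≤ exp (t * X ω)} := fun ω hω ↦
    exp_le_exp.2 (mul_le_mul_of_nonpos_left hω ht)
  have hmarkov : exp (t * ε) * μ.real {ω | X ω ≤ ε} ≤ mgf X μ t :=
    (mul_le_mul_of_nonneg_left (measureReal_mono hsub) (exp_pos _).le).trans
      (mul_meas_ge_le_integral_of_nonneg (ae_of_all _ fun _ ↦ (exp_pos _).le) hint _)
  calc t * ε + log (μ.real {ω | X ω ≤ ε})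
      = log (exp (t * ε) * μ.real {ω | X ω ≤ ε}) := by
        rw [log_mul (exp_pos _).ne' hpos.ne', log_exp]
    _ ≤ cgf X μ t := log_le_log (by positivity) hmarkov

theorem tendsto_neg_cgf_neg_div_atTop_iff [IsProbabilityMeasure μ] (hX : AEMeasurable X μ)
    (hX0 : ∀ᵐ ω ∂μ, 0 ≤ X ω) :
    Tendsto (fun l ↦ -cgf X μ (-l) / l) atTop (𝓝 0) ↔ ∀ ε > 0, 0 < μ {ω | X ω < ε} := by
  constructor
  · intro h ε hε
    by_contra! hzero
    have hge : ∀ᵐ ω ∂μ, ε ≤ X ω := by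
      simpa only [ae_iff, not_le] using nonpos_iff_eq_zero.1 hzero
    refine absurd (ge_of_tendsto h ?_) (not_le.2 hε)
    filter_upwards [eventually_gt_atTop 0] with l hl
    rw [le_div_iff₀ hl]
    linarith [cgf_le_mul_of_ae_ge hX (neg_nonpos.2 hl.le) hge]
  · intro h
    refine tendsto_div_atTop_zero_of_sublinear ?_ fun ε hε ↦ ?_
    · filter_upwards [eventually_ge_atTop 0] with l hl
      linarith [cgf_le_mul_of_ae_ge hX (neg_nonpos.2 hl) hX0]
    · have hpos : 0 < μ.real {ω | X ω ≤ ε} := by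
        refine ENNReal.toReal_pos (ne_of_gt ?_) (measure_ne_top _ _)
        exact (h ε hε).trans_le (measure_mono (Set.ofPred_subset_ofPred.2 fun _ ↦ le_of_lt))
      refine ⟨-log (μ.real {ω | X ω ≤ ε}), ?_⟩
      filter_upwards [eventually_ge_atTop 0] with l hl
      have hint := integrable_exp_mul_of_nonpos_of_ae_ge hX (neg_nonpos.2 hl) hX0
      linarith [mul_add_log_measureReal_le_cgf (neg_nonpos.2 hl) hint hpos]

end Cgf

/-- For a nonnegative random variable `X` on a probability space `(Ω, P)` with
log-Laplace transform `φ(λ) = -log E[exp(-λ X)]`, zero lies in the support of the law of `X`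
(i.e. `P(X < ε) > 0` for every `ε > 0`) if and only if `φ(λ)/λ → 0` as `λ → ∞`. -/
theorem stmt_0 {Ω : Type*} [MeasurableSpace Ω] (P : Measure Ω) [IsProbabilityMeasure P]
    (X : Ω → ℝ) (hXmeas : Measurable X) (hX0 : ∀ᵐ ω ∂P, 0 ≤ X ω)
    (φ : ℝ → ℝ) (hφ : ∀ l : ℝ, 0 ≤ l → φ l = -Real.log (∫ ω, Real.exp (-l * X ω) ∂P)) :
    (∀ ε : ℝ, 0 < ε → 0 < P {ω | X ω < ε}) ↔
      Tendsto (fun l : ℝ => φ l / l) atTop (nhds 0) := by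
  have hφ_cgf : (fun l ↦ -cgf X P (-l) / l) =ᶠ[atTop] fun l ↦ φ l / l := by
    filter_upwards [eventually_ge_atTop 0] with l hl
    rw [hφ l hl, cgf, mgf]
  rw [← tendsto_congr' hφ_cgf, tendsto_neg_cgf_neg_div_atTop_iff hXmeas.aemeasurable hX0]
end

section
/- Let (p_n)_{n≥1} and (q_n)_{n≥1} be nonincreasing deterministic sequences of nonnegative real numbers with Σ_{n≥1} p_n = 1. Let (A_n)_{n≥1} be a sequence of independent, identically distributed, almost surely positive real random variables, and assume S := Σ_{k≥1} A_k p_k < ∞ almost surely. Define the random weights p̃_n := A_n p_n / S for n ≥ 1. Then E[Σ_{n≥1} p̃_n q_n] ≤ Σ_{n≥1} p_n q_n. -/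
/-!
Let `r n = E[p̃ n]`. Exchanging `A i` and `A j` (`i < j`) preserves the law of the sequence `A`,
and averaging `(A i - A j) / S` over the two configurations gives `p j r i ≤ p i r j`: the
ratios `r n / p n` are nondecreasing. Since `∑ r n = ∑ p n = 1`, every partial sum of `r` is
then at most the corresponding partial sum of `p`, and Abel summation against the nonincreasing
`q` yields `∑ r n q n ≤ ∑ p n q n`. Finally `E[∑ p̃ n q n] = ∑ r n q n` by dominated
convergence, the weights `p̃ n` being a random probability vector.
-/

open MeasureTheory ProbabilityTheory Finset

theorem HasSum.comp_swap_mul {ι : Type*} [DecidableEq ι] {a p : ι → ℝ} {s : ℝ}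
    (h : HasSum (fun k => a k * p k) s) {i j : ι} (hij : i ≠ j) :
    HasSum (fun k => a (Equiv.swap i j k) * p k) (s - (a i - a j) * (p i - p j)) := by
  have hswap : (fun k => a (Equiv.swap i j k) * p k) =
      Function.update (Function.update (fun k => a k * p k) i (a j * p i)) j (a i * p j) := by
    funext k
    rcases eq_or_ne k j with rfl | hkj
    · simp
    rcases eq_or_ne k i with rfl | hki
    · simp [hkj]
    · simp [Function.update_of_ne hkj, Function.update_of_ne hki,
        Equiv.swap_apply_of_ne_of_ne hki hkj]
  rw [hswap]
  have h' := (h.update i (a j * p i)).update j (a i * p j)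
  rwa [Function.update_of_ne hij.symm,
    show a i * p j - a j * p j + (a j * p i - a i * p i + s) = s - (a i - a j) * (p i - p j) by
      ring] at h'

theorem sum_range_le_of_hasSum_of_mul_le {p r : ℕ → ℝ} {s : ℝ} (hs : 0 < s)
    (hp : HasSum p s) (hr : HasSum r s) (hpr : ∀ i j, i < j → p j * r i ≤ p i * r j)
    (m : ℕ) : ∑ n ∈ range m, r n ≤ ∑ n ∈ range m, p n := by
  have hp_tail := (hp.summable.sum_add_tsum_nat_add m).trans hp.tsum_eq
  have hr_tail := (hr.summable.sum_add_tsum_nat_add m).trans hr.tsum_eq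
  have key : (∑' j, p (j + m)) * ∑ n ∈ range m, r n ≤
      (∑ n ∈ range m, p n) * ∑' j, r (j + m) := by
    rw [← tsum_mul_right, ← tsum_mul_left]
    refine Summable.tsum_le_tsum (fun j => ?_)
      (((summable_nat_add_iff m).2 hp.summable).mul_right _)
      (((summable_nat_add_iff m).2 hr.summable).mul_left _)
    rw [mul_sum, sum_mul]
    exact sum_le_sum fun i hi => hpr i (j + m) (by simp at hi; omega)
  have : s * ∑ n ∈ range m, r n ≤ s * ∑ n ∈ range m, p n := by
    rw [← sub_eq_iff_eq_add'.2 hp_tail.symm, ← sub_eq_iff_eq_add'.2 hr_tail.symm] at key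
    linarith
  exact le_of_mul_le_mul_left this hs

theorem sum_range_mul_le_of_sum_range_le {p r q : ℕ → ℝ} (hq : Antitone q)
    (hq0 : ∀ n, 0 ≤ q n) (hrp : ∀ m, ∑ n ∈ range m, r n ≤ ∑ n ∈ range m, p n) (m : ℕ) :
    ∑ n ∈ range m, r n * q n ≤ ∑ n ∈ range m, p n * q n := by
  have abel : ∀ m, ∑ n ∈ range m, (r n - p n) * q n ≤ q m * ∑ n ∈ range m, (r n - p n) := by
    intro m
    induction m with
    | zero => simp
    | succ m ih =>
      have hdef : ∑ n ∈ range (m + 1), (r n - p n) ≤ 0 := by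
        rw [sum_sub_distrib]; linarith [hrp (m + 1)]
      calc ∑ n ∈ range (m + 1), (r n - p n) * q n
          ≤ q m * ∑ n ∈ range (m + 1), (r n - p n) := by
            rw [sum_range_succ, sum_range_succ]; linarith
        _ ≤ q (m + 1) * ∑ n ∈ range (m + 1), (r n - p n) :=
            mul_le_mul_of_nonpos_right (hq m.le_succ) hdef
  have hlast := mul_nonpos_of_nonneg_of_nonpos (hq0 m)
    (show ∑ n ∈ range m, (r n - p n) ≤ 0 by rw [sum_sub_distrib]; linarith [hrp m])
  simp only [sub_mul, sum_sub_distrib] at abel hlast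
  linarith [abel m]

theorem tsum_mul_le_tsum_mul_of_sum_range_le {p r q : ℕ → ℝ} (hq : Antitone q)
    (hq0 : ∀ n, 0 ≤ q n) (hrp : ∀ m, ∑ n ∈ range m, r n ≤ ∑ n ∈ range m, p n)
    (hrq : Summable fun n => r n * q n) (hpq : Summable fun n => p n * q n) :
    ∑' n, r n * q n ≤ ∑' n, p n * q n :=
  le_of_tendsto_of_tendsto' hrq.hasSum.tendsto_sum_nat hpq.hasSum.tendsto_sum_nat
    (sum_range_mul_le_of_sum_range_le hq hq0 hrp)

theorem sub_div_add_sub_div_nonpos {x y c s : ℝ} (hc : 0 ≤ c) (hs : 0 < s)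
    (hs' : 0 < s - (x - y) * c) : (x - y) / s + (y - x) / (s - (x - y) * c) ≤ 0 := by
  have hform : (x - y) / s + (y - x) / (s - (x - y) * c) =
      -((x - y) ^ 2 * c) / (s * (s - (x - y) * c)) := by
    field_simp; ring
  rw [hform]
  exact div_nonpos_of_nonpos_of_nonneg (by nlinarith [sq_nonneg (x - y)]) (by positivity)

theorem ProbabilityTheory.iIndepFun.identDistrib_precomp {ι Ω β : Type*} [MeasurableSpace Ω]
    [MeasurableSpace β] {P : Measure Ω} {X : ι → Ω → β} (h : iIndepFun X P)
    (hX : ∀ i, Measurable (X i)) {g : ι → ι} (hg : g.Injective)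
    (hXg : ∀ i, IdentDistrib (X (g i)) (X i) P P) :
    IdentDistrib (fun ω i => X i ω) (fun ω i => X (g i) ω) P P where
  aemeasurable_fst := (measurable_pi_iff.2 hX).aemeasurable
  aemeasurable_snd := (measurable_pi_iff.2 fun i => hX (g i)).aemeasurable
  map_eq := by
    rw [h.map_fun_eq_infinitePi_map hX,
      (h.precomp hg).map_fun_eq_infinitePi_map fun i => hX (g i)]
    simp_rw [(hXg _).map_eq]

theorem integral_nonpos_of_identDistrib_of_add_nonpos {Ω : Type*} [MeasurableSpace Ω]
    {P : Measure Ω} {X Y : Ω → ℝ} (h : IdentDistrib X Y P P) (hX : Integrable X P)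
    (hXY : ∀ᵐ ω ∂P, X ω + Y ω ≤ 0) : ∫ ω, X ω ∂P ≤ 0 := by
  have hsum := integral_nonpos_of_ae hXY
  rw [integral_add hX (h.integrable_iff.1 hX), ← h.integral_eq] at hsum
  linarith

section RandomProbabilityVector

variable {Ω : Type*} [MeasurableSpace Ω] {P : Measure Ω} [IsFiniteMeasure P]
  {w : ℕ → Ω → ℝ} (hw : ∀ n, AEStronglyMeasurable (w n) P) (hw0 : ∀ n, ∀ᵐ ω ∂P, 0 ≤ w n ω)
  (hw1 : ∀ᵐ ω ∂P, HasSum (fun n => w n ω) 1)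
include hw hw0 hw1

theorem integrable_of_ae_hasSum_one (n : ℕ) : Integrable (w n) P := by
  refine (integrable_const 1).mono' (hw n) ?_
  filter_upwards [hw0 n, hw1, ae_all_iff.2 hw0] with ω h0 h1 hall
  rw [Real.norm_of_nonneg h0]
  exact le_hasSum h1 n fun k _ => hall k

theorem hasSum_integral_mul_of_ae_hasSum_one {c : ℕ → ℝ} {C : ℝ} (hc : ∀ n, |c n| ≤ C) :
    HasSum (fun n => (∫ ω, w n ω ∂P) * c n) (∫ ω, ∑' n, w n ω * c n ∂P) := by
  have hbound : ∀ᵐ ω ∂P, ∀ n, ‖w n ω * c n‖ ≤ w n ω * C := by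
    filter_upwards [ae_all_iff.2 hw0] with ω h0 n
    rw [norm_mul, Real.norm_of_nonneg (h0 n)]
    exact mul_le_mul_of_nonneg_left (hc n) (h0 n)
  simp_rw [← integral_mul_const]
  refine hasSum_integral_of_dominated_convergence (fun n ω => w n ω * C)
    (fun n => (hw n).mul_const _) (fun n => hbound.mono fun ω h => h n) ?_ ?_ ?_
  · filter_upwards [hw1] with ω h using (h.mul_right C).summable
  · refine (integrable_const C).congr ?_
    filter_upwards [hw1] with ω h
    simp [(h.mul_right C).tsum_eq]
  · filter_upwards [hw1, hbound] with ω h hb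
    exact (Summable.of_norm_bounded (h.mul_right C).summable hb).hasSum

theorem hasSum_integral_of_ae_hasSum_one :
    HasSum (fun n => ∫ ω, w n ω ∂P) (P.real Set.univ) := by
  have := hasSum_integral_mul_of_ae_hasSum_one hw hw0 hw1 (c := fun _ => 1) (C := 1) (by simp)
  simp only [mul_one] at this
  rwa [integral_congr_ae (hw1.mono fun ω h => h.tsum_eq), integral_const, smul_eq_mul,
    mul_one] at this

end RandomProbabilityVector

section RandomWeight

variable {Ω : Type*} [MeasurableSpace Ω] {P : Measure Ω} {A : ℕ → Ω → ℝ} {p : ℕ → ℝ}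

/-- The paper's `p̃ n`. -/
noncomputable def randomWeight (A : ℕ → Ω → ℝ) (p : ℕ → ℝ) (n : ℕ) (ω : Ω) : ℝ :=
  A n ω * p n / ∑' k, A k ω * p k

theorem measurable_randomWeight (hA : ∀ n, Measurable (A n)) (n : ℕ) :
    Measurable (randomWeight A p n) :=
  ((hA n).mul_const _).div (Measurable.tsum fun k => (hA k).mul_const _)

theorem ae_nonneg_randomWeight (hp0 : ∀ n, 0 ≤ p n) (hApos : ∀ n, ∀ᵐ ω ∂P, 0 < A n ω) (n : ℕ) :
    ∀ᵐ ω ∂P, 0 ≤ randomWeight A p n ω := by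
  filter_upwards [ae_all_iff.2 hApos] with ω hpos
  exact div_nonneg (mul_nonneg (hpos n).le (hp0 n))
    (tsum_nonneg fun k => mul_nonneg (hpos k).le (hp0 k))

theorem ae_hasSum_randomWeight (hp0 : ∀ n, 0 ≤ p n) {k : ℕ} (hk : 0 < p k)
    (hApos : ∀ n, ∀ᵐ ω ∂P, 0 < A n ω) (hS : ∀ᵐ ω ∂P, Summable fun k => A k ω * p k) :
    ∀ᵐ ω ∂P, HasSum (fun n => randomWeight A p n ω) 1 := by
  filter_upwards [ae_all_iff.2 hApos, hS] with ω hpos hsum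
  have hSpos : 0 < ∑' k, A k ω * p k :=
    (mul_pos (hpos k) hk).trans_le
      (hsum.le_tsum k fun j _ => mul_nonneg (hpos j).le (hp0 j))
  simpa [randomWeight, div_self hSpos.ne'] using hsum.hasSum.div_const (∑' k, A k ω * p k)

/-- Exchanging `A i` and `A j` preserves the law of `A` and turns `S` into
`S - (A i - A j) (p i - p j)`; for `p j ≤ p i` the two values of `(A i - A j) / S` so obtained
have a nonpositive sum. -/
theorem mul_integral_randomWeight_le [IsFiniteMeasure P] (hp0 : ∀ n, 0 ≤ p n)
    (hA : ∀ n, Measurable (A n)) (hAindep : iIndepFun A P)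
    (hAid : ∀ m n, IdentDistrib (A m) (A n) P P) (hApos : ∀ n, ∀ᵐ ω ∂P, 0 < A n ω)
    (hS : ∀ᵐ ω ∂P, Summable fun k => A k ω * p k) {i j : ℕ} (hij : i ≠ j) (hpij : p j ≤ p i) :
    p j * ∫ ω, randomWeight A p i ω ∂P ≤ p i * ∫ ω, randomWeight A p j ω ∂P := by
  rcases (hp0 j).eq_or_lt with hpj | hpj
  · rw [← hpj, zero_mul]
    exact mul_nonneg (hp0 i) (integral_nonneg_of_ae (ae_nonneg_randomWeight hp0 hApos j))
  have hpi := hpj.trans_le hpij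
  have hint := integrable_of_ae_hasSum_one
    (fun n => (measurable_randomWeight hA n).aestronglyMeasurable)
    (ae_nonneg_randomWeight hp0 hApos) (ae_hasSum_randomWeight hp0 hpi hApos hS)
  set G : (ℕ → ℝ) → ℝ := fun a => p i * p j * (a i - a j) / ∑' k, a k * p k
  have hG : Measurable G :=
    (measurable_const.mul ((measurable_pi_apply i).sub (measurable_pi_apply j))).div
      (Measurable.tsum fun k => (measurable_pi_apply k).mul_const _)
  have hlaw := (hAindep.identDistrib_precomp hA (Equiv.swap i j).injective
    fun _ => hAid _ _).comp hG
  have hGA : (fun ω => p j * randomWeight A p i ω - p i * randomWeight A p j ω) =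
      G ∘ fun ω k => A k ω := by
    funext ω
    simp only [randomWeight, G, Function.comp]
    ring
  have hswap : ∀ᵐ ω ∂P, G (fun k => A k ω) + G (fun k => A (Equiv.swap i j k) ω) ≤ 0 := by
    filter_upwards [ae_all_iff.2 hApos, hS] with ω hpos hsum
    have hsum' := hsum.hasSum.comp_swap_mul hij
    have hSpos : 0 < ∑' k, A k ω * p k :=
      (mul_pos (hpos i) hpi).trans_le (hsum.le_tsum i fun k _ => mul_nonneg (hpos k).le (hp0 k))
    have hS'pos : 0 < ∑' k, A k ω * p k - (A i ω - A j ω) * (p i - p j) := by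
      have := le_hasSum hsum' i fun k _ => mul_nonneg (hpos _).le (hp0 k)
      rw [Equiv.swap_apply_left] at this
      exact (mul_pos (hpos j) hpi).trans_le this
    simp only [G, hsum'.tsum_eq, Equiv.swap_apply_left, Equiv.swap_apply_right, mul_div_assoc,
      ← mul_add]
    exact mul_nonpos_of_nonneg_of_nonpos (by positivity)
      (sub_div_add_sub_div_nonpos (sub_nonneg.2 hpij) hSpos hS'pos)
  have key := integral_nonpos_of_identDistrib_of_add_nonpos hlaw
    (hGA ▸ ((hint i).const_mul _).sub ((hint j).const_mul _)) hswap
  rw [← hGA] at key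
  rw [integral_sub ((hint i).const_mul _) ((hint j).const_mul _), integral_const_mul,
    integral_const_mul] at key
  linarith

end RandomWeight

/-- Pain–Zindy lemma, inequality part. Let `(p n)` and `(q n)` be
nonincreasing sequences of nonnegative reals with `∑ p n = 1`, and let `(A n)` be i.i.d.
a.s. positive random variables with `S = ∑ A k * p k < ∞` a.s. Setting
`p̃ n = A n * p n / S`, one has `E[∑ p̃ n * q n] ≤ ∑ p n * q n`. -/
theorem stmt_2 {Ω : Type*} [MeasurableSpace Ω] (P : Measure Ω) [IsProbabilityMeasure P]
    (p q : ℕ → ℝ) (hp0 : ∀ n, 0 ≤ p n) (hq0 : ∀ n, 0 ≤ q n)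
    (hpm : Antitone p) (hqm : Antitone q) (hp1 : ∑' n, p n = 1)
    (A : ℕ → Ω → ℝ) (hAmeas : ∀ n, Measurable (A n))
    (hAindep : iIndepFun A P)
    (hAid : ∀ m n, IdentDistrib (A m) (A n) P P)
    (hApos : ∀ n, ∀ᵐ ω ∂P, 0 < A n ω)
    (hS : ∀ᵐ ω ∂P, Summable fun k => A k ω * p k) :
    (∫ ω, ∑' n, (A n ω * p n / ∑' k, A k ω * p k) * q n ∂P) ≤ ∑' n, p n * q n := by
  have hp : HasSum p 1 := by
    by_cases h : Summable p
    · exact hp1 ▸ h.hasSum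
    · simp [tsum_eq_zero_of_not_summable h] at hp1
  obtain ⟨k, hk⟩ : ∃ k, 0 < p k := by
    by_contra! h
    simp [funext fun n => le_antisymm (h n) (hp0 n)] at hp1
  have hw : ∀ n, AEStronglyMeasurable (randomWeight A p n) P := fun n =>
    (measurable_randomWeight hAmeas n).aestronglyMeasurable
  have hw0 := ae_nonneg_randomWeight hp0 hApos
  have hw1 := ae_hasSum_randomWeight hp0 hk hApos hS
  have hr := hasSum_integral_of_ae_hasSum_one hw hw0 hw1
  have hrq := hasSum_integral_mul_of_ae_hasSum_one hw hw0 hw1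
    (fun n => (abs_of_nonneg (hq0 n)).trans_le (hqm n.zero_le))
  have hpq : Summable fun n => p n * q n :=
    hp.summable.mul_right (q 0) |>.of_nonneg_of_le (fun n => mul_nonneg (hp0 n) (hq0 n))
      fun n => mul_le_mul_of_nonneg_left (hqm n.zero_le) (hp0 n)
  rw [probReal_univ] at hr
  have hdom := sum_range_le_of_hasSum_of_mul_le one_pos hp hr fun i j hij =>
    mul_integral_randomWeight_le hp0 hAmeas hAindep hAid hApos hS hij.ne (hpm hij.le)
  exact hrq.tsum_eq ▸ tsum_mul_le_tsum_mul_of_sum_range_le hqm hq0 hdom hrq.summable hpq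
end

section
/- Let α > 1 and c > 0 be real numbers, and let (a_{k,j})_{k,j≥1} be nonnegative real numbers such that for every k ≥ 1 the sum Σ_{j≥1} a_{k,j} is finite. Assume that for all k ≥ 1 one has 1 + Σ_{j≥1} a_{k,j} = c · (1 + Σ_{j≥1} a_{k,j}^α)^{1/α}, and that Σ_{j≥1} a_{k,j} → 0 as k → ∞. Then c = 1 and a_{k,j} = 0 for all k, j ≥ 1. -/
/-!
Write `S k = ∑ⱼ a k j` and `T k = ∑ⱼ (a k j)^α`. Since every term of a row is at most its sum,
`(a k j)^α ≤ (S k)^(α-1) · a k j`, hence `T k ≤ (S k)^α → 0`; letting `k → ∞` in the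
identity gives `c = 1`. Then `(1 + S k)^α = 1 + T k ≤ 1 + (S k)^α`, which contradicts the strict
superadditivity `1 + s^α < (1 + s)^α` of `s ↦ s^α` unless `S k = 0`.
-/

open Filter Topology Real

namespace Real

lemma rpow_eq_rpow_sub_one_mul {x p : ℝ} (hx : 0 ≤ x) (hp : p ≠ 0) :
    x ^ p = x ^ (p - 1) * x := by
  simpa using rpow_add_one' hx (y := p - 1) (by simpa using hp)

lemma add_rpow_lt_rpow_add {p a b : ℝ} (ha : 0 < a) (hb : 0 < b) (hp : 1 < p) :
    a ^ p + b ^ p < (a + b) ^ p := by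
  have hp0 : p ≠ 0 := by positivity
  have hp1 : 0 < p - 1 := sub_pos.mpr hp
  calc a ^ p + b ^ p = a ^ (p - 1) * a + b ^ (p - 1) * b := by
        rw [rpow_eq_rpow_sub_one_mul ha.le hp0, rpow_eq_rpow_sub_one_mul hb.le hp0]
    _ < (a + b) ^ (p - 1) * a + (a + b) ^ (p - 1) * b := by
        gcongr <;> linarith
    _ = (a + b) ^ p := by
        rw [← mul_add, ← rpow_eq_rpow_sub_one_mul (by positivity) hp0]

section tsum

variable {ι : Type*} {f : ι → ℝ} {p : ℝ}

lemma rpow_le_rpow_tsum_mul (hf0 : ∀ i, 0 ≤ f i) (hf : Summable f) (hp : 1 ≤ p) (i : ι) :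
    f i ^ p ≤ (∑' j, f j) ^ (p - 1) * f i := by
  rw [rpow_eq_rpow_sub_one_mul (hf0 i) (by positivity)]
  exact mul_le_mul_of_nonneg_right
    (rpow_le_rpow (hf0 i) (hf.le_tsum i fun j _ => hf0 j) (by linarith)) (hf0 i)

lemma summable_rpow_of_summable (hf0 : ∀ i, 0 ≤ f i) (hf : Summable f) (hp : 1 ≤ p) :
    Summable fun i => f i ^ p :=
  .of_nonneg_of_le (fun i => rpow_nonneg (hf0 i) p) (rpow_le_rpow_tsum_mul hf0 hf hp)
    (hf.mul_left _)

lemma tsum_rpow_le_rpow_tsum (hf0 : ∀ i, 0 ≤ f i) (hf : Summable f) (hp : 1 ≤ p) :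
    ∑' i, f i ^ p ≤ (∑' i, f i) ^ p :=
  calc ∑' i, f i ^ p ≤ ∑' i, (∑' j, f j) ^ (p - 1) * f i :=
        (summable_rpow_of_summable hf0 hf hp).tsum_le_tsum (rpow_le_rpow_tsum_mul hf0 hf hp)
          (hf.mul_left _)
    _ = (∑' i, f i) ^ p := by
        rw [tsum_mul_left, ← rpow_eq_rpow_sub_one_mul (tsum_nonneg hf0) (by positivity)]

lemma tsum_eq_zero_of_one_add_tsum_eq (hf0 : ∀ i, 0 ≤ f i) (hf : Summable f) (hp : 1 < p)
    (h : 1 + ∑' i, f i = (1 + ∑' i, f i ^ p) ^ (1 / p)) :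
    ∑' i, f i = 0 := by
  have hS0 : 0 ≤ ∑' i, f i := tsum_nonneg hf0
  have hT0 : 0 ≤ ∑' i, f i ^ p := tsum_nonneg fun i => rpow_nonneg (hf0 i) p
  have hpow : (1 + ∑' i, f i) ^ p = 1 + ∑' i, f i ^ p := by
    rw [h, one_div, rpow_inv_rpow (by linarith) (by positivity)]
  by_contra hS
  have hstrict := one_rpow p ▸ add_rpow_lt_rpow_add one_pos (hS0.lt_of_ne' hS) hp
  linarith [tsum_rpow_le_rpow_tsum hf0 hf hp.le]

end tsum

end Real

theorem stmt_4_general (α c : ℝ) (hα : 1 < α)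
    (a : ℕ → ℕ → ℝ) (ha0 : ∀ k j, 0 ≤ a k j)
    (hsum : ∀ k, Summable fun j => a k j)
    (heq : ∀ k, 1 + ∑' j, a k j = c * (1 + ∑' j, a k j ^ α) ^ (1 / α))
    (hlim : Tendsto (fun k => ∑' j, a k j) atTop (nhds 0)) :
    c = 1 ∧ ∀ k j, a k j = 0 := by
  have hα0 : 0 < α := one_pos.trans hα
  have hpowlim : Tendsto (fun k => ∑' j, a k j ^ α) atTop (𝓝 0) := by
    refine squeeze_zero (fun k => tsum_nonneg fun j => rpow_nonneg (ha0 k j) α)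
      (fun k => tsum_rpow_le_rpow_tsum (ha0 k) (hsum k) hα.le) ?_
    simpa [zero_rpow hα0.ne'] using hlim.rpow_const (p := α) (.inr hα0.le)
  have hc : c = 1 := by
    have hrhs := ((hpowlim.const_add 1).rpow_const (p := 1 / α) (.inl (by norm_num))).const_mul c
    rw [← funext heq] at hrhs
    simpa using tendsto_nhds_unique hrhs (by simpa using hlim.const_add 1)
  subst hc
  refine ⟨rfl, fun k j => le_antisymm ?_ (ha0 k j)⟩
  calc a k j ≤ ∑' i, a k i := (hsum k).le_tsum j fun i _ => ha0 k i
    _ = 0 := tsum_eq_zero_of_one_add_tsum_eq (ha0 k) (hsum k) hα (by simpa using heq k)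

/-- Let `α > 1`, `c > 0` and `(a k j)` be nonnegative reals with each row
summable. If `1 + ∑_j a k j = c * (1 + ∑_j (a k j)^α)^(1/α)` for every `k` and
`∑_j a k j → 0` as `k → ∞`, then `c = 1` and all the `a k j` vanish. -/
theorem stmt_4 (α c : ℝ) (hα : 1 < α) (hc : 0 < c)
    (a : ℕ → ℕ → ℝ) (ha0 : ∀ k j, 0 ≤ a k j)
    (hsum : ∀ k, Summable fun j => a k j)
    (heq : ∀ k, 1 + ∑' j, a k j = c * (1 + ∑' j, a k j ^ α) ^ (1 / α))
    (hlim : Tendsto (fun k => ∑' j, a k j) atTop (nhds 0)) :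
    c = 1 ∧ ∀ k j, a k j = 0 :=
  stmt_4_general α c hα a ha0 hsum heq hlim
end
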